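/- For every ε with 0 < ε < π/4, the function φ₀ converges to 0 uniformly on the sector {r·e^{iθ} : r ≥ 0, |θ − π| ≤ π/4 − ε} as |z| → ∞; that is, for every δ > 0 there exists R > 0 such that |φ₀(r·e^{iθ})| < δ whenever r > R and |θ − π| ≤ π/4 − ε. -/

import Mathlib

/-! Write `z = r u` with `u = e^{iθ}`. Substituting `s = r t` turns the integral in `φ₀` into
`u ∫₀^r e^{-u² s²} ds`. In the sector `Re u < 0` and `Re u² = cos 2θ ≥ sin 2ε > 0`, so the
complete half-line Gaussian integral `∫₀^∞ e^{-u² s²} ds = -√π / (2u)` exactly cancels the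
constant `1`, leaving `φ₀(r u) = -(u/√π) ∫_r^∞ e^{-u² s²} ds - e^{-r² u²}/2`. Both terms are
dominated by the real Gaussian `e^{-s² sin 2ε}`, independently of `θ`. -/

open Complex MeasureTheory Filter Topology

noncomputable def phi0 (z : ℂ) : ℂ :=
  (1 / 2) * ((2 / (Real.sqrt Real.pi : ℂ)) *
      (∫ t in (0:ℝ)..1, z * Complex.exp (-((t : ℂ) * z) ^ 2))
    - Complex.exp (-z ^ 2) + 1)

open Set

theorem integral_zero_one_mul_cexp_neg_sq (r : ℝ) (u : ℂ) :
    ∫ t in (0:ℝ)..1, r * u * cexp (-(t * (r * u)) ^ 2) =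
      u * ∫ s in (0:ℝ)..r, cexp (-u ^ 2 * s ^ 2) := by
  have h := intervalIntegral.smul_integral_comp_mul_left
    (fun s : ℝ => cexp (-u ^ 2 * s ^ 2)) r (a := 0) (b := 1)
  simp only [mul_zero, mul_one, real_smul] at h
  rw [← h, ← intervalIntegral.integral_const_mul, ← intervalIntegral.integral_const_mul]
  congr 1 with t
  push_cast
  ring_nf

theorem integral_Ioi_cexp_neg_sq_mul_sq {v : ℂ} (hv : 0 < v.re) (hv2 : 0 < (v ^ 2).re) :
    ∫ s in Ioi (0:ℝ), cexp (-v ^ 2 * s ^ 2) = Real.sqrt Real.pi / (2 * v) := by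
  have hsq : (Real.pi : ℂ) / v ^ 2 = (Real.sqrt Real.pi / v) ^ 2 := by
    rw [div_pow, ← ofReal_pow, Real.sq_sqrt Real.pi_pos.le]
  have hre : 0 < (Real.sqrt Real.pi / v : ℂ).re := by
    rw [div_re, ofReal_re, ofReal_im, zero_mul, zero_div, add_zero]
    have : 0 < normSq v := normSq_pos.mpr (fun h => by simp [h] at hv)
    positivity
  rw [integral_gaussian_complex_Ioi hv2, hsq, one_div, sq_cpow_two_inv hre]
  ring

theorem phi0_ofReal_mul_eq {u : ℂ} (hu : u.re < 0) (hu2 : 0 < (u ^ 2).re) (r : ℝ) :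
    phi0 (r * u) = -(u * ∫ s in Ioi r, cexp (-u ^ 2 * s ^ 2)) / Real.sqrt Real.pi
      - cexp (-(r * u) ^ 2) / 2 := by
  have hint := integrable_cexp_neg_mul_sq hu2
  have hgauss := integral_Ioi_cexp_neg_sq_mul_sq (v := -u) (by simpa using hu) (by simpa using hu2)
  rw [neg_sq] at hgauss
  have hπ : (Real.sqrt Real.pi : ℂ) ≠ 0 := ofReal_ne_zero.mpr (Real.sqrt_pos.mpr Real.pi_pos).ne'
  have hu0 : u ≠ 0 := fun h => by simp [h] at hu
  rw [phi0, integral_zero_one_mul_cexp_neg_sq,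
    ← intervalIntegral.integral_Ioi_sub_Ioi' hint.integrableOn hint.integrableOn, hgauss]
  field_simp
  ring

theorem norm_integral_Ioi_cexp_neg_mul_sq_le {b : ℂ} {c : ℝ} (hc : 0 < c) (hcb : c ≤ b.re)
    (r : ℝ) : ‖∫ s in Ioi r, cexp (-b * s ^ 2)‖ ≤ ∫ s in Ioi r, Real.exp (-c * s ^ 2) := by
  refine norm_integral_le_of_norm_le (integrable_exp_neg_mul_sq hc).integrableOn
    (Eventually.of_forall fun s => ?_)
  rw [norm_exp, ← ofReal_pow, re_mul_ofReal, neg_re]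
  gcongr

theorem norm_phi0_ofReal_mul_le {u : ℂ} {c r : ℝ} (hu : u.re < 0) (hc : 0 < c)
    (hcu : c ≤ (u ^ 2).re) :
    ‖phi0 (r * u)‖ ≤ ‖u‖ / Real.sqrt Real.pi * (∫ s in Ioi r, Real.exp (-c * s ^ 2))
      + Real.exp (-c * r ^ 2) / 2 := by
  have htail := norm_integral_Ioi_cexp_neg_mul_sq_le hc hcu r
  have hexp : ‖cexp (-(r * u) ^ 2)‖ ≤ Real.exp (-c * r ^ 2) := by
    rw [norm_exp, mul_pow, ← ofReal_pow, neg_re, re_ofReal_mul, neg_mul, mul_comm c]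
    gcongr
  rw [phi0_ofReal_mul_eq hu (hc.trans_le hcu) r]
  calc _ ≤ ‖u * ∫ s in Ioi r, cexp (-u ^ 2 * s ^ 2)‖ / Real.sqrt Real.pi
        + ‖cexp (-(r * u) ^ 2)‖ / 2 := by
        refine (norm_sub_le _ _).trans_eq ?_
        simp [abs_of_nonneg (Real.sqrt_nonneg _)]
    _ ≤ _ := by
      rw [norm_mul, mul_div_right_comm]
      gcongr

theorem sin_two_mul_le_cos_two_mul_of_abs_sub_pi_le {ε θ : ℝ} (hε : 0 ≤ ε)
    (hθ : |θ - Real.pi| ≤ Real.pi / 4 - ε) :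
    Real.sin (2 * ε) ≤ Real.cos (2 * θ) := by
  have h : |2 * θ - 2 * Real.pi| ≤ Real.pi / 2 - 2 * ε := by
    rw [← mul_sub, abs_mul, abs_two]
    linarith
  calc Real.sin (2 * ε) = Real.cos (Real.pi / 2 - 2 * ε) := (Real.cos_pi_div_two_sub _).symm
    _ ≤ Real.cos |2 * θ - 2 * Real.pi| :=
      Real.cos_le_cos_of_nonneg_of_le_pi (abs_nonneg _) (by linarith [Real.pi_pos]) h
    _ = Real.cos (2 * θ) := by rw [Real.cos_abs, Real.cos_sub_two_pi]

theorem phi0_tendsto_zero_uniformly_on_left_sector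
    (ε : ℝ) (hε0 : 0 < ε) (hε : ε < Real.pi / 4) :
    ∀ δ : ℝ, 0 < δ → ∃ R : ℝ, 0 < R ∧ ∀ r : ℝ, R < r → ∀ θ : ℝ, |θ - Real.pi| ≤ Real.pi / 4 - ε →
      ‖phi0 ((r : ℂ) * Complex.exp (θ * Complex.I))‖ < δ := by
  intro δ hδ
  set c := Real.sin (2 * ε)
  have hc : 0 < c := Real.sin_pos_of_pos_of_lt_pi (by linarith) (by linarith)
  have hbound : Tendsto (fun r : ℝ => 1 / Real.sqrt Real.pi * (∫ s in Ioi r, Real.exp (-c * s ^ 2))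
      + Real.exp (-c * r ^ 2) / 2) atTop (𝓝 0) := by
    have hexp : Tendsto (fun r : ℝ => Real.exp (-c * r ^ 2)) atTop (𝓝 0) :=
      Real.tendsto_exp_atBot.comp <| tendsto_neg_atTop_atBot.comp
        ((tendsto_pow_atTop two_ne_zero).const_mul_atTop hc) |>.congr fun r => by simp
    simpa using ((tendsto_integral_Ioi_zero tendsto_id).const_mul _).add (hexp.div_const 2)
  obtain ⟨R, hR⟩ := eventually_atTop.mp (hbound.eventually_lt_const hδ)
  refine ⟨max R 1, by positivity, fun r hr θ hθ => ?_⟩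
  have hre : (cexp (θ * I)).re < 0 := by
    rw [exp_ofReal_mul_I_re]
    apply Real.cos_neg_of_pi_div_two_lt_of_lt <;> linarith [abs_le.mp hθ]
  have hsq : c ≤ (cexp (θ * I) ^ 2).re := by
    rw [← exp_nat_mul, show ((2 : ℕ) : ℂ) * (θ * I) = ((2 * θ : ℝ) : ℂ) * I by push_cast; ring,
      exp_ofReal_mul_I_re]
    exact sin_two_mul_le_cos_two_mul_of_abs_sub_pi_le hε0.le hθ
  refine (norm_phi0_ofReal_mul_le hre hc hsq).trans_lt ?_
  rw [norm_exp_ofReal_mul_I]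
  exact hR r (le_max_left R 1 |>.trans hr.le)
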